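/- Let K be a field of characteristic zero, let n ≥ 2, and let L be a LAnKe over K. For all x_1,…,x_n, z_1,…,z_{n-1}, w_1,…,w_{n-1} ∈ L, setting z_0 = [x_1,…,x_n], one has (n−2)·[[z_0,z_1,…,z_{n-1}],w_1,…,w_{n-1}] + [[z_0,w_1,…,w_{n-1}],z_1,…,z_{n-1}] + Σ_{i=1}^{n-1} (−1)^i Σ_{j=1}^{n-1} (−1)^{j+1} [[z_0,w_j,z_1,…,ẑ_i,…,z_{n-1}],z_i,w_1,…,ŵ_j,…,w_{n-1}] = 0, where the integer coefficient n−2 acts via the canonical map ℤ → K. -/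

import Mathlib

/-!
Expand `[[z₀, z], w]` by the Jacobi identity in its first argument: one term is
`[[z₀, w], z]`, the others are `[z₀, z₁, …, [zᵢ, w], …]`. Moving `[zᵢ, w]` to the front and
expanding it by the Jacobi identity again, its first term `[[zᵢ, z₀, …, ẑᵢ, …], w]` is
`[[z₀, z], w]` up to the sign that the move introduced, and the remaining terms, after putting
`w_j` second, form the `i`-th row of the double sum. Collecting the `n - 1` copies of
`[[z₀, z], w]` gives the relation.
-/

/-- The tuple `(a, v₀, …, v_{n-2})` of length `n`: one element `a` prepended to the
length-`(n-1)` tuple `v`. -/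
def consTup {L : Type*} {n : ℕ} (a : L) (v : Fin (n - 1) → L) : Fin n → L :=
  fun m =>
    if h0 : (m : ℕ) = 0 then a
    else v ⟨(m : ℕ) - 1, by have := m.isLt; omega⟩

/-- The tuple `(a, b, v₀, …, v̂ᵢ, …, v_{n-2})` of length `n`: two elements `a, b` followed
by the length-`(n-1)` tuple `v` with its `i`-th entry omitted. -/
def pairCons {L : Type*} {n : ℕ} (a b : L) (v : Fin (n - 1) → L) (i : Fin (n - 1)) :
    Fin n → L :=
  fun m =>
    if h0 : (m : ℕ) = 0 then a
    else if h1 : (m : ℕ) = 1 then b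
    else if (m : ℕ) - 2 < (i : ℕ) then
      v ⟨(m : ℕ) - 2, by have := m.isLt; have := i.isLt; omega⟩
    else v ⟨(m : ℕ) - 1, by have := m.isLt; omega⟩

/-- A LAnKe (Lie algebra of the `n`-th kind, or Filippov algebra) over a field `K`:
a vector space `L` with an `n`-linear bracket which is skew-symmetric and satisfies the
generalized Jacobi identity. -/
structure LAnKe (K : Type*) [Field K] (n : ℕ) (L : Type*)
    [AddCommGroup L] [Module K L] where
  bracket : MultilinearMap K (fun _ : Fin n => L) L
  /-- `[x_1, …, x_n] = sign σ • [x_{σ(1)}, …, x_{σ(n)}]` for every permutation `σ`. -/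
  skew : ∀ (x : Fin n → L) (σ : Equiv.Perm (Fin n)),
    bracket x = (Equiv.Perm.sign σ : ℤ) • bracket (x ∘ σ)
  /-- The generalized Jacobi identity:
  `[[x_1,…,x_n], y_1,…,y_{n-1}] = Σ_{i=1}^n [x_1,…,[x_i,y_1,…,y_{n-1}],…,x_n]`. -/
  jacobi : ∀ (x : Fin n → L) (y : Fin (n - 1) → L),
    bracket (consTup (bracket x) y) =
      ∑ i : Fin n, bracket (Function.update x i (bracket (consTup (x i) y)))


theorem Fin.removeNth_succ_cons {α : Type*} {q : ℕ} (a : α) (v : Fin (q + 1) → α)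
    (i : Fin (q + 1)) :
    i.succ.removeNth (Fin.cons a v : Fin (q + 2) → α) = Fin.cons a (i.removeNth v) := by
  ext k
  cases k using Fin.cases <;> simp [Fin.removeNth_apply, Fin.succ_succAbove_succ]

section Tuples

variable {L : Type*} {q : ℕ}

theorem consTup_eq_cons (a : L) (v : Fin q → L) : consTup (n := q + 1) a v = Fin.cons a v := by
  ext k
  cases k using Fin.cases <;> simp [consTup]

theorem pairCons_eq_cons_cons (a b : L) (v : Fin (q + 1) → L) (i : Fin (q + 1)) :
    pairCons (n := q + 2) a b v i = Fin.cons a (Fin.cons b (i.removeNth v)) := by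
  ext k
  cases k using Fin.cases with
  | zero => simp [pairCons]
  | succ k =>
    cases k using Fin.cases with
    | zero => simp [pairCons]
    | succ k =>
      simp only [pairCons, Fin.cons_succ, Fin.removeNth_apply, Fin.succAbove, Fin.lt_def,
        Fin.val_succ, Fin.val_castSucc, Nat.add_one_ne_zero, dite_false, Nat.add_eq_right,
        add_tsub_cancel_right]
      split_ifs <;> first | omega | rfl

end Tuples

theorem neg_one_pow_zsmul_neg_one_pow_zsmul {M : Type*} [AddCommGroup M] (k : ℕ) (x : M) :
    (-1 : ℤ) ^ k • (-1 : ℤ) ^ k • x = x := by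
  rw [smul_smul, ← mul_pow, neg_one_mul, neg_neg, one_pow, one_smul]

namespace LAnKe

variable {K : Type*} [Field K] {L : Type*} [AddCommGroup L] [Module K L] {n : ℕ}

theorem bracket_eq_cons_removeNth (alg : LAnKe K (n + 1) L) (x : Fin (n + 1) → L)
    (p : Fin (n + 1)) :
    alg.bracket x = (-1 : ℤ) ^ (p : ℕ) • alg.bracket (Fin.cons (x p) (p.removeNth x)) := by
  rw [Fin.cons_removeNth_eq_comp_cycleRange_symm, alg.skew x p.cycleRange.symm,
    Equiv.Perm.sign_symm, Fin.sign_cycleRange]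
  push_cast
  rfl

theorem bracket_cons_zsmul (alg : LAnKe K (n + 1) L) (a : ℤ) (x : L) (v : Fin n → L) :
    alg.bracket (Fin.cons (a • x) v) = a • alg.bracket (Fin.cons x v) := by
  simpa only [MultilinearMap.toLinearMap_apply, Fin.update_cons_zero, Function.update_eq_self]
    using map_zsmul (alg.bracket.toLinearMap (Fin.cons x v) 0) a x

theorem jacobi_cons (alg : LAnKe K (n + 1) L) (x : Fin (n + 1) → L) (y : Fin n → L) :
    alg.bracket (Fin.cons (alg.bracket x) y) =
      ∑ i, alg.bracket (Function.update x i (alg.bracket (Fin.cons (x i) y))) := by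
  simpa only [consTup_eq_cons] using alg.jacobi x y

theorem bracket_cons_eq_cons_removeNth (alg : LAnKe K (n + 2) L) (a : L) (v : Fin (n + 1) → L)
    (i : Fin (n + 1)) :
    alg.bracket (Fin.cons a v) =
      (-1 : ℤ) ^ ((i : ℕ) + 1) • alg.bracket (Fin.cons (v i) (Fin.cons a (i.removeNth v))) := by
  rw [alg.bracket_eq_cons_removeNth _ i.succ, Fin.cons_succ, Fin.removeNth_succ_cons, Fin.val_succ]

theorem bracket_cons_cons_swap (alg : LAnKe K (n + 2) L) (a b : L) (v : Fin n → L) :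
    alg.bracket (Fin.cons a (Fin.cons b v)) = -alg.bracket (Fin.cons b (Fin.cons a v)) := by
  rw [alg.bracket_cons_eq_cons_removeNth a _ 0]
  simp

theorem jacobi_cons_cons (alg : LAnKe K (n + 2) L) (a : L) (v y : Fin (n + 1) → L) :
    alg.bracket (Fin.cons (alg.bracket (Fin.cons a v)) y) =
      alg.bracket (Fin.cons (alg.bracket (Fin.cons a y)) v) +
        ∑ i, alg.bracket (Fin.cons a (Function.update v i (alg.bracket (Fin.cons (v i) y)))) := by
  rw [jacobi_cons, Fin.sum_univ_succ]
  simp only [Fin.cons_zero, Fin.cons_succ, Fin.update_cons_zero, Fin.cons_update]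

theorem bracket_cons_update_bracket (alg : LAnKe K (n + 2) L) (z0 : L) (z w : Fin (n + 1) → L)
    (i : Fin (n + 1)) :
    alg.bracket (Fin.cons z0 (Function.update z i (alg.bracket (Fin.cons (z i) w)))) =
      alg.bracket (Fin.cons (alg.bracket (Fin.cons z0 z)) w) +
        ∑ j : Fin (n + 1), ((-1 : ℤ) ^ ((i : ℕ) + 1) * (-1 : ℤ) ^ ((j : ℕ) + 1 + 1)) •
          alg.bracket (Fin.cons (alg.bracket (Fin.cons z0 (Fin.cons (w j) (i.removeNth z))))
            (Fin.cons (z i) (j.removeNth w))) := by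
  have hzi : alg.bracket (Fin.cons (z i) (Fin.cons z0 (i.removeNth z))) =
      (-1 : ℤ) ^ ((i : ℕ) + 1) • alg.bracket (Fin.cons z0 z) := by
    rw [alg.bracket_cons_eq_cons_removeNth z0 z i, neg_one_pow_zsmul_neg_one_pow_zsmul]
  have hwj : ∀ j, alg.bracket (Fin.cons (z i) (Function.update w j
      (alg.bracket (Fin.cons (w j) (Fin.cons z0 (i.removeNth z)))))) =
      (-1 : ℤ) ^ ((j : ℕ) + 1 + 1) • alg.bracket (Fin.cons
        (alg.bracket (Fin.cons z0 (Fin.cons (w j) (i.removeNth z))))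
        (Fin.cons (z i) (j.removeNth w))) := by
    intro j
    rw [alg.bracket_cons_eq_cons_removeNth _ _ j, Function.update_self, Fin.removeNth_update,
      alg.bracket_cons_cons_swap (w j) z0, ← neg_one_zsmul (alg.bracket _), bracket_cons_zsmul,
      smul_smul, ← pow_succ]
  rw [alg.bracket_cons_eq_cons_removeNth z0 _ i, Function.update_self, Fin.removeNth_update,
    jacobi_cons_cons, hzi, bracket_cons_zsmul, smul_add, neg_one_pow_zsmul_neg_one_pow_zsmul,
    Finset.smul_sum]
  simp only [hwj, smul_smul]

theorem jacobi_relation {m : ℕ} (alg : LAnKe K (m + 2) L) (z0 : L) (z w : Fin (m + 1) → L) :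
    (m : ℤ) • alg.bracket (Fin.cons (alg.bracket (Fin.cons z0 z)) w) +
      alg.bracket (Fin.cons (alg.bracket (Fin.cons z0 w)) z) +
      ∑ i : Fin (m + 1), ∑ j : Fin (m + 1),
        ((-1 : ℤ) ^ ((i : ℕ) + 1) * (-1 : ℤ) ^ ((j : ℕ) + 1 + 1)) •
          alg.bracket (Fin.cons (alg.bracket (Fin.cons z0 (Fin.cons (w j) (i.removeNth z))))
            (Fin.cons (z i) (j.removeNth w))) = 0 := by
  have key := alg.jacobi_cons_cons z0 z w
  simp only [bracket_cons_update_bracket, Finset.sum_add_distrib, Finset.sum_const,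
    Finset.card_univ, Fintype.card_fin] at key
  linear_combination (norm := module) -key

end LAnKe

/-- `z i : L` for `i : Fin (n-1)` is the paper's `z_{i+1}` (so the paper's sign `(-1)^i` is
`(-1)^{(i:ℕ)+1}`), likewise for `w`. -/
theorem lanke_relation_general
    (K : Type*) [Field K] (n : ℕ) (hn : 2 ≤ n)
    (L : Type*) [AddCommGroup L] [Module K L] (alg : LAnKe K n L)
    (z0 : L)
    (z w : Fin (n - 1) → L) :
    (((n : ℤ) - 2 : ℤ) : K) •
        alg.bracket (consTup (alg.bracket (consTup z0 z)) w) +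
      alg.bracket (consTup (alg.bracket (consTup z0 w)) z) +
      ∑ i : Fin (n - 1), ∑ j : Fin (n - 1),
        ((-1 : ℤ) ^ ((i : ℕ) + 1) * (-1 : ℤ) ^ (((j : ℕ) + 1) + 1)) •
          alg.bracket
            (pairCons (alg.bracket (pairCons z0 (w j) z i)) (z i) w j) = 0 := by
  obtain ⟨m, rfl⟩ : ∃ m, n = m + 2 := ⟨n - 2, by omega⟩
  have hcoef : ((((m + 2 : ℕ) : ℤ) - 2 : ℤ) : K) = ((m : ℤ) : K) := by push_cast; ring
  rw [hcoef, Int.cast_smul_eq_zsmul]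
  simp only [consTup_eq_cons, pairCons_eq_cons_cons]
  exact alg.jacobi_relation z0 z w

/-- in a LAnKe, with `z_0 = [x_1,…,x_n]`,
`(n-2)·[[z_0,z_1,…,z_{n-1}], w_1,…,w_{n-1}] + [[z_0,w_1,…,w_{n-1}], z_1,…,z_{n-1}]
   + Σ_{i=1}^{n-1} (-1)^i Σ_{j=1}^{n-1} (-1)^{j+1}
       [[z_0,w_j,z_1,…,ẑ_i,…,z_{n-1}], z_i, w_1,…,ŵ_j,…,w_{n-1}] = 0`,
where `n-2` acts via the canonical map `ℤ → K`. Here `z i : L` for `i : Fin (n-1)` is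
the paper's `z_{i+1}` (so the paper's sign `(-1)^i` is `(-1)^{(i:ℕ)+1}`), likewise for `w`. -/
theorem lanke_relation
    (K : Type*) [Field K] [CharZero K] (n : ℕ) (hn : 2 ≤ n)
    (L : Type*) [AddCommGroup L] [Module K L] (alg : LAnKe K n L)
    (x : Fin n → L) (z0 : L) (hz0 : z0 = alg.bracket x)
    (z w : Fin (n - 1) → L) :
    (((n : ℤ) - 2 : ℤ) : K) •
        alg.bracket (consTup (alg.bracket (consTup z0 z)) w) +
      alg.bracket (consTup (alg.bracket (consTup z0 w)) z) +
      ∑ i : Fin (n - 1), ∑ j : Fin (n - 1),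
        ((-1 : ℤ) ^ ((i : ℕ) + 1) * (-1 : ℤ) ^ (((j : ℕ) + 1) + 1)) •
          alg.bracket
            (pairCons (alg.bracket (pairCons z0 (w j) z i)) (z i) w j) = 0 :=
  lanke_relation_general K n hn L alg z0 z w
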